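/- (Computation of Υ_γ) Under the hypotheses of the previous statement with u ≠ 0, Υ_γ := ∑_{s ∈ F_{2^m}, Tr^m_k(s) = γ} ∑_{x ∈ F_{2^m}*} (-1)^{Tr_m(u s x^(-d)) + Tr_m(vx)} equals 2^m - 2^{m-k} if γ² = Tr^m_k(v u^e), and equals -2^{m-k} otherwise. -/

import Mathlib

/-!
Write `A = F_{2^k}`, realised as the fixed points of `a ↦ a ^ 2 ^ k`, and `ψ y = (-1)^{Tr_m y}`.
Since `m / k` is odd (this is what the gcd condition gives), `Tr_m (t · Tr^m_k y) = Tr_m (t y)`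
for `t ∈ A`. Hence `ψ` is nontrivial on `A`, and orthogonality over `F_{2^m}` and over `A` shows
that the sum of `ψ (t s)` over the fibre `Tr^m_k s = γ` is `2^{m-k} ψ (t γ)` for `t ∈ A` and `0`
otherwise. With `t = u x^{-d}` and the substitution `x = u^e b`, only `b ∈ A^*` survive. For
those, `c = b^{-d}` satisfies `c^{e+2} = 1`, so `c² = b`, and every term becomes
`ψ (b (γ² + Tr^m_k (v u^e)))`. A final orthogonality relation over `A` gives `2^k - 1` or `-1`.
-/

open Finset Polynomial

namespace AddChar

theorem sum_eq_zero_of_add_mem {G R : Type*} [AddGroup G] [CommRing R] [IsDomain R]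
    (ψ : AddChar G R) {W : Finset G} (hW : ∀ a ∈ W, ∀ b ∈ W, a + b ∈ W) {w₀ : G}
    (hw₀ : w₀ ∈ W) (hψ : ψ w₀ ≠ 1) : ∑ w ∈ W, ψ w = 0 := by
  classical
  have himage : W.image (w₀ + ·) = W :=
    eq_of_subset_of_card_le (image_subset_iff.2 fun w hw => hW w₀ hw₀ w hw)
      (card_image_of_injective W (add_right_injective w₀)).ge
  refine eq_zero_of_mul_eq_self_left hψ ?_
  conv_rhs => rw [← himage]
  rw [sum_image fun a _ b _ h => add_left_cancel h, mul_sum]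
  simp only [map_add_eq_mul]

end AddChar

theorem odd_of_gcd_two_pow_sub_one_two_pow_add_one {k n : ℕ}
    (h : Nat.gcd (2 ^ (k * n) - 1) (2 ^ k + 1) = 1) : Odd n := by
  by_contra hn
  obtain ⟨j, rfl⟩ := Nat.not_odd_iff_even.1 hn
  have hdvd : 2 ^ k + 1 ∣ 2 ^ (k * (j + j)) - 1 :=
    calc 2 ^ k + 1 ∣ (2 ^ k) ^ 2 - 1 ^ 2 := Dvd.intro _ (Nat.sq_sub_sq _ _).symm
      _ ∣ ((2 ^ k) ^ 2) ^ j - 1 ^ j := by rw [one_pow]; exact Nat.sub_dvd_pow_sub_pow _ _ _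
      _ = 2 ^ (k * (j + j)) - 1 := by ring_nf
  have := Nat.eq_one_of_dvd_one (h ▸ Nat.dvd_gcd hdvd dvd_rfl)
  simp at this

theorem FiniteField.pow_eq_self_of_mod_card_sub_one {F : Type*} [Field F] [Fintype F] {a : ℕ}
    (ha : a % (Fintype.card F - 1) = 1) (x : F) : x ^ a = x := by
  rcases eq_or_ne x 0 with rfl | hx
  · exact zero_pow fun h => by simp [h] at ha
  · rw [pow_eq_pow_mod a (FiniteField.pow_card_sub_one_eq_one x hx), ha, pow_one]

instance charP_two_of_algebra (F : Type*) [Field F] [Algebra (ZMod 2) F] : CharP F 2 :=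
  charP_of_injective_algebraMap' (ZMod 2) 2

section PowFixedPoints

variable (F : Type*) [Field F] [Fintype F] [DecidableEq F]

def powFixedPoints (q : ℕ) : Finset F := univ.filter fun a => a ^ q = a

variable {F} {q : ℕ} {a b : F}

@[simp]
theorem mem_powFixedPoints : a ∈ powFixedPoints F q ↔ a ^ q = a := by
  simp [powFixedPoints]

theorem zero_mem_powFixedPoints (hq : q ≠ 0) : (0 : F) ∈ powFixedPoints F q := by
  simp [hq]

theorem one_mem_powFixedPoints : (1 : F) ∈ powFixedPoints F q := by
  simp

theorem mul_mem_powFixedPoints (ha : a ∈ powFixedPoints F q) (hb : b ∈ powFixedPoints F q) :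
    a * b ∈ powFixedPoints F q := by
  simp_all [mul_pow]

theorem inv_mem_powFixedPoints (ha : a ∈ powFixedPoints F q) : a⁻¹ ∈ powFixedPoints F q := by
  simp_all [inv_pow]

theorem pow_mem_powFixedPoints (ha : a ∈ powFixedPoints F q) (j : ℕ) :
    a ^ j ∈ powFixedPoints F q := by
  rw [mem_powFixedPoints] at *
  rw [← pow_mul, mul_comm, pow_mul, ha]

theorem add_mem_powFixedPoints {p k : ℕ} [ExpChar F p] (ha : a ∈ powFixedPoints F (p ^ k))
    (hb : b ∈ powFixedPoints F (p ^ k)) : a + b ∈ powFixedPoints F (p ^ k) := by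
  simp_all [add_pow_expChar_pow]

theorem pow_pow_eq_self_of_mem_powFixedPoints (ha : a ∈ powFixedPoints F q) (i : ℕ) :
    a ^ q ^ i = a := by
  have := (show Function.IsFixedPt (· ^ q) a from mem_powFixedPoints.1 ha).iterate i
  rwa [pow_iterate] at this

theorem card_powFixedPoints (p : ℕ) [Fact p.Prime] [Algebra (ZMod p) F] {k m : ℕ} (hk : k ≠ 0)
    (hkm : k ∣ m) (hF : Fintype.card F = p ^ m) : #(powFixedPoints F (p ^ k)) = p ^ k := by
  have hp : 1 < p := (Fact.out : p.Prime).one_lt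
  have hf : (X ^ p ^ k - X : (ZMod p)[X]) ≠ 0 := FiniteField.X_pow_card_pow_sub_X_ne_zero _ hk hp
  have hsplit : Splits ((X ^ p ^ k - X : (ZMod p)[X]).map (algebraMap (ZMod p) F)) := by
    have hdvd : (X ^ p ^ k - X : (ZMod p)[X]) ∣ X ^ Fintype.card F - X := by
      rw [hF]; exact dvd_pow_pow_sub_self_of_dvd hkm
    refine (FiniteField.splits_X_pow_card_sub_X p).of_dvd ?_ (Polynomial.map_dvd _ hdvd)
    exact Polynomial.map_ne_zero (FiniteField.X_pow_card_sub_X_ne_zero _ Fintype.one_lt_card)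
  have hroots :=
    card_rootSet_eq_natDegree (galois_poly_separable p (p ^ k) (dvd_pow_self p hk)) hsplit
  rw [FiniteField.X_pow_card_pow_sub_X_natDegree_eq _ hk hp] at hroots
  refine Eq.trans ?_ hroots
  rw [← Set.toFinset_card]
  congr 1
  ext a
  simp [mem_rootSet, hf, sub_eq_zero]

theorem pow_card_sub_eq_one_of_mem_powFixedPoints {c : F} (hc : c ∈ powFixedPoints F q)
    (hc0 : c ≠ 0) (hq : q ≤ Fintype.card F) : c ^ (Fintype.card F - q) = 1 := by
  have := FiniteField.pow_card c
  rwa [← Nat.sub_add_cancel hq, pow_add, mem_powFixedPoints.1 hc, mul_eq_right₀ hc0] at this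

end PowFixedPoints

section TraceChar

variable (F : Type*) [Field F] [Algebra (ZMod 2) F]

noncomputable def traceChar : AddChar F ℤ :=
  (AddChar.zmodChar 2 (by norm_num : (-1 : ℤ) ^ 2 = 1)).compAddMonoidHom
    (Algebra.trace (ZMod 2) F).toAddMonoidHom

variable {F}

theorem traceChar_apply (y : F) :
    traceChar F y = (-1) ^ (Algebra.trace (ZMod 2) F y).val := rfl

variable [Fintype F]

theorem trace_pow_two_pow (y : F) (j : ℕ) :
    Algebra.trace (ZMod 2) F (y ^ 2 ^ j) = Algebra.trace (ZMod 2) F y := by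
  have := Algebra.trace_eq_of_algEquiv (FiniteField.frobeniusAlgEquivOfAlgebraic (ZMod 2) F ^ j) y
  rwa [AlgEquiv.coe_pow, FiniteField.coe_frobeniusAlgEquivOfAlgebraic_iterate, ZMod.card] at this

theorem traceChar_ne_one : traceChar F ≠ 1 := by
  obtain ⟨y, hy⟩ := Algebra.trace_surjective (ZMod 2) F 1
  intro h
  have := DFunLike.congr_fun h y
  rw [traceChar_apply, hy, AddChar.one_apply, ZMod.val_one] at this
  norm_num at this

theorem sum_traceChar_mul [DecidableEq F] (b : F) :
    ∑ x : F, traceChar F (x * b) = if b = 0 then (Fintype.card F : ℤ) else 0 := by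
  rw [AddChar.sum_mulShift b (AddChar.IsPrimitive.of_ne_one traceChar_ne_one), Nat.cast_ite,
    Nat.cast_zero]

theorem traceChar_sq (y : F) : traceChar F (y ^ 2) = traceChar F y := by
  rw [traceChar_apply, traceChar_apply, ← trace_pow_two_pow y 1, pow_one]

end TraceChar

-- `Tr^m_k` for `m = k * n`
def relTrace {F : Type*} [CommSemiring F] (k n : ℕ) (s : F) : F :=
  ∑ i ∈ range n, s ^ 2 ^ (k * i)

section CharTwo

variable {F : Type*} [Field F] [Fintype F] [DecidableEq F] [Algebra (ZMod 2) F] {k n : ℕ}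

theorem relTrace_mem_powFixedPoints (hF : Fintype.card F = 2 ^ (k * n)) (y : F) :
    relTrace k n y ∈ powFixedPoints F (2 ^ k) := by
  set f : ℕ → F := fun i => y ^ 2 ^ (k * i)
  have hshift := (sum_range_succ' f n).symm.trans (sum_range_succ f n)
  have hfn : f n = f 0 := by simp [f, ← hF, FiniteField.pow_card]
  rw [hfn, add_left_inj] at hshift
  rw [mem_powFixedPoints, relTrace, sum_pow_char_pow]
  simpa [f, ← pow_mul, ← pow_add, mul_add] using hshift

theorem traceChar_mul_relTrace (hn : Odd n) {t : F}
    (ht : t ∈ powFixedPoints F (2 ^ k)) (y : F) :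
    traceChar F (t * relTrace k n y) = traceChar F (t * y) := by
  have hterm (i : ℕ) : Algebra.trace (ZMod 2) F (t * y ^ 2 ^ (k * i)) =
      Algebra.trace (ZMod 2) F (t * y) := by
    rw [← trace_pow_two_pow (t * y) (k * i), mul_pow, pow_mul 2 k i,
      pow_pow_eq_self_of_mem_powFixedPoints ht]
  rw [traceChar_apply, traceChar_apply, relTrace, mul_sum, map_sum,
    sum_congr rfl fun i _ => hterm i, sum_const, card_range, nsmul_eq_mul, hn.natCast_zmod_two,
    one_mul]

theorem sum_powFixedPoints_traceChar_mul (hF : Fintype.card F = 2 ^ (k * n)) (hn : Odd n)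
    {δ : F} (hδ : δ ∈ powFixedPoints F (2 ^ k)) :
    ∑ a ∈ powFixedPoints F (2 ^ k), traceChar F (a * δ) =
      if δ = 0 then (#(powFixedPoints F (2 ^ k)) : ℤ) else 0 := by
  split_ifs with hδ0
  · simp [hδ0]
  -- `Tr^m_k y ∈ A` and `ψ (Tr^m_k y) = ψ y ≠ 1`, so `δ⁻¹ · Tr^m_k y` witnesses nontriviality
  obtain ⟨y, hy⟩ := AddChar.ne_one_iff.1 (traceChar_ne_one (F := F))
  simp_rw [mul_comm _ δ]
  refine AddChar.sum_eq_zero_of_add_mem ((traceChar F).mulShift δ)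
    (fun a ha b hb => add_mem_powFixedPoints ha hb)
    (mul_mem_powFixedPoints (inv_mem_powFixedPoints hδ) (relTrace_mem_powFixedPoints hF y)) ?_
  rwa [AddChar.mulShift_apply, mul_inv_cancel_left₀ hδ0, ← one_mul (relTrace k n y),
    traceChar_mul_relTrace hn one_mem_powFixedPoints, one_mul]

theorem card_mul_sum_relTrace_fiber (hF : Fintype.card F = 2 ^ (k * n)) (hn : Odd n) {γ : F}
    (hγ : γ ∈ powFixedPoints F (2 ^ k)) (t : F) :
    #(powFixedPoints F (2 ^ k)) * ∑ s ∈ univ.filter (relTrace k n · = γ), traceChar F (t * s) =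
      if t ∈ powFixedPoints F (2 ^ k) then (Fintype.card F : ℤ) * traceChar F (t * γ) else 0 := by
  set A := powFixedPoints F (2 ^ k)
  have hindicator (s : F) : (if relTrace k n s = γ then (#A : ℤ) else 0) =
      ∑ a ∈ A, traceChar F (a * (relTrace k n s + γ)) := by
    rw [sum_powFixedPoints_traceChar_mul hF hn
      (add_mem_powFixedPoints (relTrace_mem_powFixedPoints hF s) hγ)]
    simp only [CharTwo.add_eq_zero, A]
  calc (#A : ℤ) * ∑ s ∈ univ.filter (relTrace k n · = γ), traceChar F (t * s)
      = ∑ s, ∑ a ∈ A, traceChar F (a * (relTrace k n s + γ)) * traceChar F (t * s) := by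
        simp_rw [← sum_mul, ← hindicator, ite_mul, zero_mul, sum_ite, sum_const_zero, add_zero,
          mul_sum]
    _ = ∑ a ∈ A, traceChar F (a * γ) * ∑ s, traceChar F (s * (a + t)) := by
        rw [sum_comm]
        refine sum_congr rfl fun a ha => ?_
        rw [mul_sum]
        refine sum_congr rfl fun s _ => ?_
        rw [mul_add, AddChar.map_add_eq_mul, traceChar_mul_relTrace hn ha, mul_comm s,
          add_mul, AddChar.map_add_eq_mul, mul_comm (traceChar F (a * s))]
        ring
    _ = if t ∈ A then (Fintype.card F : ℤ) * traceChar F (t * γ) else 0 := by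
        simp_rw [sum_traceChar_mul, CharTwo.add_eq_zero, mul_ite, mul_zero, sum_ite_eq']
        rw [mul_comm]

theorem sum_relTrace_fiber (hk : k ≠ 0) (hF : Fintype.card F = 2 ^ (k * n)) (hn : Odd n)
    {γ : F} (hγ : γ ∈ powFixedPoints F (2 ^ k)) (t : F) :
    ∑ s ∈ univ.filter (relTrace k n · = γ), traceChar F (t * s) =
      if t ∈ powFixedPoints F (2 ^ k) then 2 ^ (k * n - k) * traceChar F (t * γ) else 0 := by
  have h := card_mul_sum_relTrace_fiber hF hn hγ t
  rw [card_powFixedPoints 2 hk (dvd_mul_right k n) hF, hF] at h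
  have hsplit : (2 : ℤ) ^ (k * n) = 2 ^ k * 2 ^ (k * n - k) := by
    rw [← pow_add, Nat.add_sub_cancel' (Nat.le_mul_of_pos_right k hn.pos)]
  apply mul_left_cancel₀ (pow_ne_zero k (two_ne_zero : (2 : ℤ) ≠ 0))
  push_cast at h
  rw [h, hsplit]
  split_ifs <;> ring

theorem traceChar_inv_pow_mul_mul_traceChar_mul {e d : ℕ} (hed : ∀ y : F, y ^ (e * d) = y)
    (he : ∀ c ∈ powFixedPoints F (2 ^ k), c ≠ 0 → c ^ (e + 2) = 1) (hn : Odd n) {b : F}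
    (hb : b ∈ powFixedPoints F (2 ^ k)) (hb0 : b ≠ 0) (γ w : F) :
    traceChar F ((b ^ d)⁻¹ * γ) * traceChar F (w * b) =
      traceChar F (b * (γ ^ 2 + relTrace k n w)) := by
  set c := (b ^ d)⁻¹
  have hc0 : c ≠ 0 := inv_ne_zero (pow_ne_zero d hb0)
  have hce : c ^ e = b⁻¹ := by rw [inv_pow, ← pow_mul, mul_comm, hed]
  have hcsq : c ^ 2 = b := by
    have := he c (inv_mem_powFixedPoints (pow_mem_powFixedPoints hb d)) hc0
    rw [pow_add, hce] at this
    exact ((inv_mul_eq_one₀ hb0).1 this).symm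
  rw [← traceChar_sq, mul_pow, hcsq, mul_comm w, ← traceChar_mul_relTrace hn hb w, mul_add,
    AddChar.map_add_eq_mul]

theorem sum_relTrace_fiber_sum_traceChar {e d : ℕ} (hk : k ≠ 0)
    (hF : Fintype.card F = 2 ^ (k * n)) (hn : Odd n) (hed : ∀ y : F, y ^ (e * d) = y)
    (he : ∀ c ∈ powFixedPoints F (2 ^ k), c ≠ 0 → c ^ (e + 2) = 1) {u : F} (hu : u ≠ 0) (v : F)
    {γ : F} (hγ : γ ∈ powFixedPoints F (2 ^ k)) :
    ∑ s ∈ univ.filter (relTrace k n · = γ), ∑ x ∈ univ.filter (· ≠ 0),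
        traceChar F (u * s * (x ^ d)⁻¹) * traceChar F (v * x) =
      2 ^ (k * n - k) * ∑ b ∈ (powFixedPoints F (2 ^ k)).erase 0,
        traceChar F (b * (γ ^ 2 + relTrace k n (v * u ^ e))) := by
  have hsubst (b : F) : u * ((u ^ e * b) ^ d)⁻¹ = (b ^ d)⁻¹ := by
    rw [mul_pow, ← pow_mul, hed, mul_inv, mul_inv_cancel_left₀ hu]
  calc _ = ∑ x ∈ univ.filter (· ≠ 0), traceChar F (v * x) *
        ∑ s ∈ univ.filter (relTrace k n · = γ), traceChar F (u * (x ^ d)⁻¹ * s) := by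
        rw [sum_comm]
        simp_rw [mul_sum, mul_right_comm u, mul_comm (traceChar F (v * _))]
    _ = ∑ b ∈ univ.filter (· ≠ 0), traceChar F (v * u ^ e * b) *
        ∑ s ∈ univ.filter (relTrace k n · = γ), traceChar F ((b ^ d)⁻¹ * s) := by
        rw [sum_filter, sum_filter, ← Equiv.sum_comp (Equiv.mulLeft₀ _ (pow_ne_zero e hu))]
        simp [hsubst, hu, mul_assoc]
    _ = ∑ b ∈ univ.filter (· ≠ 0), if b ∈ powFixedPoints F (2 ^ k) then
        2 ^ (k * n - k) * traceChar F (b * (γ ^ 2 + relTrace k n (v * u ^ e))) else 0 := by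
        refine sum_congr rfl fun b hb => ?_
        have hb0 : b ≠ 0 := (mem_filter.1 hb).2
        rw [sum_relTrace_fiber hk hF hn hγ]
        by_cases hbA : b ∈ powFixedPoints F (2 ^ k)
        · rw [if_pos (inv_mem_powFixedPoints (pow_mem_powFixedPoints hbA d)), if_pos hbA,
            ← traceChar_inv_pow_mul_mul_traceChar_mul hed he hn hbA hb0]
          ring
        · have hcA : (b ^ d)⁻¹ ∉ powFixedPoints F (2 ^ k) := fun hcA => hbA <| by
            simpa [← pow_mul, mul_comm d, hed] using
              pow_mem_powFixedPoints (inv_mem_powFixedPoints hcA) e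
          rw [if_neg hcA, if_neg hbA, mul_zero]
    _ = _ := by
        rw [← sum_filter, mul_sum, filter_filter]
        congr 1
        ext b
        simp

theorem sum_erase_zero_powFixedPoints_traceChar_mul (hF : Fintype.card F = 2 ^ (k * n))
    (hn : Odd n) (hk : k ≠ 0) {δ : F} (hδ : δ ∈ powFixedPoints F (2 ^ k)) :
    ∑ b ∈ (powFixedPoints F (2 ^ k)).erase 0, traceChar F (b * δ) =
      if δ = 0 then (2 ^ k - 1 : ℤ) else -1 := by
  rw [sum_erase_eq_sub (zero_mem_powFixedPoints (pow_ne_zero k two_ne_zero)),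
    sum_powFixedPoints_traceChar_mul hF hn hδ, card_powFixedPoints 2 hk (dvd_mul_right k n) hF,
    zero_mul, AddChar.map_zero_eq_one]
  split_ifs
  · push_cast; ring
  · ring

end CharTwo

theorem stmt_12_general (m k : ℕ) (hkpos : 0 < k) (hk : k ∣ m)
    (hgcd : Nat.gcd (2 ^ m - 1) (2 ^ k + 1) = 1)
    (e d : ℕ) (he : e = 2 ^ m - 2 ^ k - 2) (hd : (e * d) % (2 ^ m - 1) = 1)
    (F : Type*) [Field F] [Fintype F] [DecidableEq F] [Algebra (ZMod 2) F]
    (hF : Fintype.card F = 2 ^ m)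
    (relTr : F → F) (hrelTr : ∀ s, relTr s = ∑ i ∈ Finset.range (m / k), s ^ (2 ^ (k * i)))
    (u v : F) (hu : u ≠ 0) (γ : F) (hγ : γ ^ (2 ^ k) = γ) :
    ∑ s ∈ Finset.univ.filter (fun s : F => relTr s = γ),
      ∑ x ∈ Finset.univ.filter (fun x : F => x ≠ 0),
        (-1 : ℤ) ^ (Algebra.trace (ZMod 2) F (u * s * (x ^ d)⁻¹)).val *
          (-1 : ℤ) ^ (Algebra.trace (ZMod 2) F (v * x)).val =
      if γ ^ 2 = relTr (v * u ^ e) then (2 ^ m - 2 ^ (m - k) : ℤ)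
      else -(2 ^ (m - k) : ℤ) := by
  obtain ⟨n, rfl⟩ := hk
  have hn : Odd n := odd_of_gcd_two_pow_sub_one_two_pow_add_one hgcd
  -- `k = m` would give `e = 0` by truncated subtraction, contradicting `hd`
  have hkn : k < k * n := (Nat.le_mul_of_pos_right k hn.pos).lt_of_ne fun h => by
    rw [← h, Nat.sub_self, Nat.zero_sub] at he
    simp [he] at hd
  obtain rfl : relTr = relTrace k n :=
    funext fun s => by rw [hrelTr, Nat.mul_div_cancel_left n hkpos, relTrace]
  have hγA : γ ∈ powFixedPoints F (2 ^ k) := mem_powFixedPoints.2 hγ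
  have he2 (c : F) (hc : c ∈ powFixedPoints F (2 ^ k)) (hc0 : c ≠ 0) : c ^ (e + 2) = 1 := by
    have h2k : 2 ^ k * 2 ≤ 2 ^ (k * n) := pow_succ 2 k ▸ Nat.pow_le_pow_right two_pos hkn
    have h2 : 2 ≤ 2 ^ k := Nat.le_self_pow hkpos.ne' 2
    have : e + 2 = Fintype.card F - 2 ^ k := by rw [hF, he]; omega
    exact this ▸ pow_card_sub_eq_one_of_mem_powFixedPoints hc hc0 (by rw [hF]; omega)
  simp only [← traceChar_apply]
  rw [sum_relTrace_fiber_sum_traceChar hkpos.ne' hF hn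
      (FiniteField.pow_eq_self_of_mod_card_sub_one (hF ▸ hd)) he2 hu v hγA,
    sum_erase_zero_powFixedPoints_traceChar_mul hF hn hkpos.ne'
      (add_mem_powFixedPoints (pow_mem_powFixedPoints hγA 2) (relTrace_mem_powFixedPoints hF _))]
  simp only [CharTwo.add_eq_zero]
  have hsplit : (2 : ℤ) ^ (k * n) = 2 ^ (k * n - k) * 2 ^ k := by
    rw [← pow_add, Nat.sub_add_cancel hkn.le]
  split_ifs
  · rw [hsplit]; ring
  · ring

/-- Computation of `Υ_γ`: for `u ≠ 0` and `γ ∈ F_{2^k}`,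
`∑_{Tr^m_k(s)=γ} ∑_{x≠0} (-1)^{Tr_m(u s x^(-d))+Tr_m(vx)}` equals
`2^m - 2^{m-k}` if `γ² = Tr^m_k(v u^e)`, and `-2^{m-k}` otherwise. -/
theorem stmt_12 (m k : ℕ) (hm : 0 < m) (hkpos : 0 < k) (hk : k ∣ m)
    (hgcd : Nat.gcd (2 ^ m - 1) (2 ^ k + 1) = 1)
    (e d : ℕ) (he : e = 2 ^ m - 2 ^ k - 2) (hd : (e * d) % (2 ^ m - 1) = 1)
    (F : Type*) [Field F] [Fintype F] [DecidableEq F] [Algebra (ZMod 2) F]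
    (hF : Fintype.card F = 2 ^ m)
    (relTr : F → F) (hrelTr : ∀ s, relTr s = ∑ i ∈ Finset.range (m / k), s ^ (2 ^ (k * i)))
    (u v : F) (hu : u ≠ 0) (γ : F) (hγ : γ ^ (2 ^ k) = γ) :
    ∑ s ∈ Finset.univ.filter (fun s : F => relTr s = γ),
      ∑ x ∈ Finset.univ.filter (fun x : F => x ≠ 0),
        (-1 : ℤ) ^ (Algebra.trace (ZMod 2) F (u * s * (x ^ d)⁻¹)).val *
          (-1 : ℤ) ^ (Algebra.trace (ZMod 2) F (v * x)).val =
      if γ ^ 2 = relTr (v * u ^ e) then (2 ^ m - 2 ^ (m - k) : ℤ)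
      else -(2 ^ (m - k) : ℤ) :=
  stmt_12_general m k hkpos hk hgcd e d he hd F hF relTr hrelTr u v hu γ hγ
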